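/- arXiv:math/9907183 — 2 statements merged into one kernel-verified Lean document; each statement's English description precedes it below -/
import Mathlib

section
/- The map π ↦ α(π), sending a partition to the partition of its angle lengths α_i = π_i + π'_i − 2i + 1, is a bijection between the set of partitions of n all of whose successive ranks lie in {1,2} and the set of partitions of n whose successive parts differ by at least 2 and all of whose parts exceed 1. -/
/-- The conjugate partition: `conj π i = #{j ≥ 1 : π j ≥ i}`. -/
noncomputable def conj (π : ℕ → ℕ) (i : ℕ) : ℕ := {j : ℕ | 1 ≤ j ∧ i ≤ π j}.ncard

/-- A partition, as a function from part indices (starting at 1) to part sizes: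
nonincreasing on indices ≥ 1, eventually zero, with the unused index 0 set to 0. -/
def IsPartition (π : ℕ → ℕ) : Prop :=
  π 0 = 0 ∧ (∀ i j, 1 ≤ i → i ≤ j → π j ≤ π i) ∧ ∃ N, ∀ j, N ≤ j → π j = 0

/-- The number partitioned, i.e. the sum of all parts. -/
noncomputable def size (π : ℕ → ℕ) : ℕ := ∑' j, π j

/-- The Durfee square size: the largest `d` with `π d ≥ d`. -/
noncomputable def durfee (π : ℕ → ℕ) : ℕ := sSup {d : ℕ | d ≤ π d}

/-- The number of parts. -/
noncomputable def len (π : ℕ → ℕ) : ℕ := conj π 1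

/-- The `i`-th successive rank `r_i = π_i - π'_i`. -/
noncomputable def rank (π : ℕ → ℕ) (i : ℕ) : ℤ := (π i : ℤ) - (conj π i : ℤ)

/-- The `i`-th angle (hook) length `α_i = π_i + π'_i - 2 i + 1`, as an integer. -/
noncomputable def ang (π : ℕ → ℕ) (i : ℕ) : ℤ := (π i : ℤ) + (conj π i : ℤ) - 2 * i + 1

/-- The partition `α(π)` of angle lengths: `α_i = π_i + π'_i - 2 i + 1` for `1 ≤ i ≤ d(π)`,
and `0` outside that range. -/
noncomputable def angPart (π : ℕ → ℕ) (i : ℕ) : ℕ :=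
  if 1 ≤ i ∧ i ≤ durfee π then π i + conj π i + 1 - 2 * i else 0


/-!
Write the hook length as `α_i = (π_i - i) + (π'_i - i) + 1`, arm plus leg plus one. When the rank,
arm minus leg, is `1` or `2`, it is fixed by the parity of `α_i`, so `α` recovers every arm and leg
on the Durfee square; these determine `π`, since the parts below the square are read off from the
columns by conjugation. Conversely, if consecutive parts of `α` differ by at least `2` and all
exceed `1`, the arms and legs so obtained decrease strictly and glue to a partition with hook
lengths `α`. Counting cells hook by hook shows that `π` and `α(π)` partition the same number.
-/

open Finset

theorem Set.eq_Icc_one_ncard {s : Set ℕ} (hs : s.Finite) (h0 : 0 ∉ s)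
    (hdown : ∀ k ∈ s, ∀ k', 1 ≤ k' → k' ≤ k → k' ∈ s) : s = Set.Icc 1 s.ncard := by
  obtain ⟨t, rfl⟩ := hs.exists_finset_coe
  rw [Set.ncard_coe_finset]
  rcases t.eq_empty_or_nonempty with rfl | hne
  · simp
  obtain ⟨M, rfl⟩ : ∃ M, t = Finset.Icc 1 M := by
    refine ⟨t.max' hne, Finset.ext fun k => ⟨fun hk => ?_, fun hk => ?_⟩⟩
    · exact Finset.mem_Icc.2 ⟨Nat.one_le_iff_ne_zero.2 (by rintro rfl; exact h0 hk), t.le_max' k hk⟩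
    · exact hdown _ (t.max'_mem hne) k (Finset.mem_Icc.1 hk).1 (Finset.mem_Icc.1 hk).2
  simp

theorem antitoneOn_Icc_of_succ_le {β : Type*} [Preorder β] {f : ℕ → β} {m n : ℕ}
    (h : ∀ i, m ≤ i → i + 1 ≤ n → f (i + 1) ≤ f i) : AntitoneOn f (Set.Icc m n) :=
  antitoneOn_of_succ_le Set.ordConnected_Icc fun i _ hi hi' => by
    rw [Order.succ_eq_add_one] at hi' ⊢
    exact h i hi.1 hi'.2

theorem sum_Icc_two_mul_sub_one (d : ℕ) : ∑ i ∈ Icc 1 d, (2 * i - 1) = d * d := by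
  induction d with
  | zero => simp
  | succ k ih =>
    rw [sum_Icc_succ_top (by omega), ih]
    ring_nf
    omega

theorem size_eq_sum_Icc {f : ℕ → ℕ} {N : ℕ} (h0 : f 0 = 0) (hN : ∀ j, N < j → f j = 0) :
    size f = ∑ j ∈ Icc 1 N, f j := by
  refine tsum_eq_sum fun j hj => ?_
  rw [mem_Icc] at hj
  rcases Nat.eq_zero_or_pos j with rfl | hj0
  · exact h0
  · exact hN j (by omega)

theorem angPart_of_le {π : ℕ → ℕ} {i : ℕ} (hi : 1 ≤ i) (hid : i ≤ durfee π) :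
    angPart π i = π i + conj π i + 1 - 2 * i :=
  if_pos ⟨hi, hid⟩

theorem angPart_of_durfee_lt {π : ℕ → ℕ} {i : ℕ} (hid : durfee π < i) : angPart π i = 0 :=
  if_neg (by omega)

theorem angPart_zero {π : ℕ → ℕ} : angPart π 0 = 0 :=
  if_neg (by omega)

namespace IsPartition

variable {π : ℕ → ℕ} (hπ : IsPartition π)
include hπ

theorem setOf_le_apply_eq_Icc {i : ℕ} (hi : 1 ≤ i) :
    {j | 1 ≤ j ∧ i ≤ π j} = Set.Icc 1 (conj π i) := by
  obtain ⟨-, hmono, N, hN⟩ := hπ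
  have hfin : {j | 1 ≤ j ∧ i ≤ π j}.Finite := (Set.finite_Iio N).subset fun j hj =>
    lt_of_not_ge fun hjN => by
      have := hN j hjN
      have := hj.2
      omega
  refine Set.eq_Icc_one_ncard hfin (by simp) fun k hk k' hk' hk'k => ?_
  exact ⟨hk', hk.2.trans (hmono k' k hk' hk'k)⟩

theorem le_apply_iff_le_conj {i j : ℕ} (hi : 1 ≤ i) (hj : 1 ≤ j) : i ≤ π j ↔ j ≤ conj π i := by
  have h := Set.ext_iff.1 (hπ.setOf_le_apply_eq_Icc hi) j
  simpa [hj] using h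

theorem conj_conj {j : ℕ} (hj : 1 ≤ j) : conj (conj π) j = π j := by
  have h : {i | 1 ≤ i ∧ j ≤ conj π i} = Set.Icc 1 (π j) := by
    ext i
    exact and_congr_right fun hi => (hπ.le_apply_iff_le_conj hi hj).symm
  rw [conj, h, Set.ncard_Icc_nat]
  omega

theorem conj_le_conj {i i' : ℕ} (hi : 1 ≤ i) (hii' : i ≤ i') : conj π i' ≤ conj π i := by
  rcases Nat.eq_zero_or_pos (conj π i') with h | h
  · omega
  · have := (hπ.le_apply_iff_le_conj (hi.trans hii') h).2 le_rfl
    exact (hπ.le_apply_iff_le_conj hi h).1 (by omega)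

theorem conj_le_of_forall_lt {i N : ℕ} (hi : 1 ≤ i) (hN : ∀ j, N < j → π j = 0) :
    conj π i ≤ N := by
  by_contra h
  have := (hπ.le_apply_iff_le_conj hi (j := conj π i) (by omega)).2 le_rfl
  rw [hN _ (by omega)] at this
  omega

theorem apply_eq_zero_of_len_lt {j : ℕ} (hj : len π < j) : π j = 0 := by
  by_contra h
  have := (hπ.le_apply_iff_le_conj le_rfl (by omega : 1 ≤ j)).1 (by omega)
  exact absurd hj (not_lt.2 this)

theorem bddAbove_setOf_le_apply : BddAbove {d | d ≤ π d} :=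
  ⟨π 1, fun k (hk : k ≤ π k) => by
    rcases Nat.eq_zero_or_pos k with rfl | hk1
    · exact Nat.zero_le _
    · exact hk.trans (hπ.2.1 1 k le_rfl hk1)⟩

theorem durfee_le_apply_durfee : durfee π ≤ π (durfee π) :=
  Nat.sSup_mem (s := {d | d ≤ π d}) ⟨0, Nat.zero_le _⟩ hπ.bddAbove_setOf_le_apply

theorem apply_lt_of_durfee_lt {k : ℕ} (hk : durfee π < k) : π k < k :=
  lt_of_not_ge fun h => (le_csSup hπ.bddAbove_setOf_le_apply h).not_gt hk

theorem durfee_le_apply {i : ℕ} (hi : 1 ≤ i) (hid : i ≤ durfee π) : durfee π ≤ π i :=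
  hπ.durfee_le_apply_durfee.trans (hπ.2.1 i (durfee π) hi hid)

theorem durfee_le_conj {i : ℕ} (hi : 1 ≤ i) (hid : i ≤ durfee π) : durfee π ≤ conj π i :=
  (hπ.le_apply_iff_le_conj hi (hi.trans hid)).1 (hid.trans hπ.durfee_le_apply_durfee)

theorem conj_le_durfee {i : ℕ} (hid : durfee π < i) : conj π i ≤ durfee π := by
  by_contra h
  have := (hπ.le_apply_iff_le_conj (i := i) (j := durfee π + 1) (by omega) (by omega)).2 (by omega)
  have := hπ.apply_lt_of_durfee_lt (lt_add_one (durfee π))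
  omega

theorem apply_eq_card_of_durfee_lt {j : ℕ} (hj : durfee π < j) :
    π j = #{i ∈ Icc 1 (durfee π) | j ≤ conj π i} := by
  have h : {i | 1 ≤ i ∧ j ≤ conj π i} = ↑({i ∈ Icc 1 (durfee π) | j ≤ conj π i}) := by
    ext i
    simp only [Set.mem_ofPred_eq, coe_filter, mem_Icc]
    refine ⟨fun ⟨hi, hij⟩ => ⟨⟨hi, ?_⟩, hij⟩, fun ⟨⟨hi, _⟩, hij⟩ => ⟨hi, hij⟩⟩
    by_contra hid
    have := hπ.conj_le_durfee (not_le.1 hid)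
    omega
  rw [← hπ.conj_conj (by omega : 1 ≤ j), conj, h, Set.ncard_coe_finset]

theorem eq_of_durfee_eq {σ : ℕ → ℕ} (hσ : IsPartition σ) (hd : durfee π = durfee σ)
    (h : ∀ i, 1 ≤ i → i ≤ durfee π → π i = σ i ∧ conj π i = conj σ i) : π = σ := by
  funext j
  rcases Nat.eq_zero_or_pos j with rfl | hj
  · rw [hπ.1, hσ.1]
  by_cases hjd : j ≤ durfee π
  · exact (h j hj hjd).1
  rw [hπ.apply_eq_card_of_durfee_lt (by omega), hσ.apply_eq_card_of_durfee_lt (by omega), ← hd]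
  exact congrArg card (filter_congr fun i hi => by rw [(h i (mem_Icc.1 hi).1 (mem_Icc.1 hi).2).2])

theorem size_eq_sum_durfee :
    size π = ∑ i ∈ Icc 1 (durfee π), (π i + conj π i - durfee π) := by
  obtain ⟨N₀, hN₀⟩ := hπ.2.2
  set d := durfee π
  set N := max N₀ d
  have hN : ∀ j, N < j → π j = 0 := fun j hj => hN₀ j (by omega)
  have hbelow : ∑ j ∈ Ioc d N, π j = ∑ i ∈ Icc 1 d, (conj π i - d) := by
    calc ∑ j ∈ Ioc d N, π j = ∑ j ∈ Ioc d N, #{i ∈ Icc 1 d | j ≤ conj π i} :=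
          sum_congr rfl fun j hj => hπ.apply_eq_card_of_durfee_lt (mem_Ioc.1 hj).1
      _ = ∑ i ∈ Icc 1 d, #{j ∈ Ioc d N | j ≤ conj π i} :=
          (sum_card_bipartiteAbove_eq_sum_card_bipartiteBelow fun i j => j ≤ conj π i).symm
      _ = ∑ i ∈ Icc 1 d, (conj π i - d) := sum_congr rfl fun i hi => by
          have hiN := hπ.conj_le_of_forall_lt (mem_Icc.1 hi).1 hN
          rw [show {j ∈ Ioc d N | j ≤ conj π i} = Ioc d (conj π i) by
            ext j; simp only [mem_filter, mem_Ioc]; omega, Nat.card_Ioc]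
  have hsplit : Icc 1 N = Icc 1 d ∪ Ioc d N := by
    ext j; simp only [mem_union, mem_Icc, mem_Ioc]; omega
  have hdisj : Disjoint (Icc 1 d) (Ioc d N) :=
    disjoint_left.2 fun j hj hj' => by simp only [mem_Icc, mem_Ioc] at hj hj'; omega
  rw [size_eq_sum_Icc hπ.1 hN, hsplit, sum_union hdisj, hbelow, ← sum_add_distrib]
  refine sum_congr rfl fun i hi => ?_
  have := hπ.durfee_le_conj (mem_Icc.1 hi).1 (mem_Icc.1 hi).2
  omega

theorem angPart_add_two_le {i : ℕ} (hi : 1 ≤ i) (hid : i + 1 ≤ durfee π) :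
    angPart π (i + 1) + 2 ≤ angPart π i := by
  have := hπ.durfee_le_conj hi (by omega)
  have := hπ.durfee_le_apply (by omega : 1 ≤ i + 1) hid
  have := hπ.2.1 i (i + 1) hi (by omega)
  have := hπ.conj_le_conj hi (Nat.le_add_right i 1)
  rw [angPart_of_le hi (by omega), angPart_of_le (by omega) hid]
  omega

theorem two_le_angPart {i : ℕ} (hi : 1 ≤ i) (hid : i ≤ durfee π) (hr : 0 < rank π i) :
    2 ≤ angPart π i := by
  have := hπ.durfee_le_conj hi hid
  rw [rank] at hr
  rw [angPart_of_le hi hid]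
  omega

theorem isPartition_angPart : IsPartition (angPart π) := by
  refine ⟨angPart_zero, fun i j hi hij => ?_, durfee π + 1, fun j hj => angPart_of_durfee_lt hj⟩
  by_cases hjd : j ≤ durfee π
  · refine antitoneOn_Icc_of_succ_le (fun k hk hkd => ?_) ⟨hi, hij.trans hjd⟩
      ⟨hi.trans hij, hjd⟩ hij
    exact (Nat.le_add_right _ 2).trans (hπ.angPart_add_two_le hk hkd)
  · rw [angPart_of_durfee_lt (not_le.1 hjd)]
    exact Nat.zero_le _

theorem len_angPart : len (angPart π) = durfee π := by
  have h : {j | 1 ≤ j ∧ 1 ≤ angPart π j} = Set.Icc 1 (durfee π) := by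
    ext j
    refine and_congr_right fun hj => ⟨fun h => ?_, fun hjd => ?_⟩
    · by_contra hjd
      rw [angPart_of_durfee_lt (not_le.1 hjd)] at h
      omega
    · have := hπ.durfee_le_apply hj hjd
      have := hπ.durfee_le_conj hj hjd
      rw [angPart_of_le hj hjd]
      omega
  rw [len, conj, h, Set.ncard_Icc_nat, Nat.add_sub_cancel]

theorem angPart_succ_add_two_le_and_two_le
    (hr : ∀ i, 1 ≤ i → i ≤ durfee π → rank π i ∈ ({1, 2} : Set ℤ)) :
    (∀ i, 1 ≤ i → i + 1 ≤ len (angPart π) → angPart π (i + 1) + 2 ≤ angPart π i) ∧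
      ∀ i, 1 ≤ i → i ≤ len (angPart π) → 2 ≤ angPart π i := by
  rw [hπ.len_angPart]
  refine ⟨fun i hi hid => hπ.angPart_add_two_le hi hid, fun i hi hid => ?_⟩
  have hri := hr i hi hid
  simp only [Set.mem_insert_iff, Set.mem_singleton_iff] at hri
  exact hπ.two_le_angPart hi hid (by omega)

theorem size_angPart : size (angPart π) = size π := by
  rw [size_eq_sum_Icc angPart_zero fun j => angPart_of_durfee_lt, hπ.size_eq_sum_durfee]
  set d := durfee π
  -- adding `d * d = ∑ (2 i - 1)` to both sides avoids truncated subtraction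
  refine Nat.add_right_cancel (m := d * d) ?_
  nth_rewrite 1 [← sum_Icc_two_mul_sub_one d]
  rw [show d * d = ∑ _i ∈ Icc 1 d, d by simp, ← sum_add_distrib, ← sum_add_distrib]
  refine sum_congr rfl fun i hi => ?_
  obtain ⟨hi, hid⟩ := mem_Icc.1 hi
  have := hπ.durfee_le_apply hi hid
  have := hπ.durfee_le_conj hi hid
  rw [angPart_of_le hi hid]
  omega

end IsPartition

def ofRowsCols (d : ℕ) (a b : ℕ → ℕ) (j : ℕ) : ℕ :=
  if j = 0 then 0 else if j ≤ d then a j else #{i ∈ Icc 1 d | j ≤ b i}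

section OfRowsCols

variable {d : ℕ} {a b : ℕ → ℕ}

theorem ofRowsCols_of_le {j : ℕ} (hj : 1 ≤ j) (hjd : j ≤ d) : ofRowsCols d a b j = a j := by
  rw [ofRowsCols, if_neg (by omega), if_pos hjd]

theorem ofRowsCols_of_lt {j : ℕ} (hj : d < j) :
    ofRowsCols d a b j = #{i ∈ Icc 1 d | j ≤ b i} := by
  rw [ofRowsCols, if_neg (by omega), if_neg (by omega)]

theorem ofRowsCols_le_of_lt {j : ℕ} (hj : d < j) : ofRowsCols d a b j ≤ d := by
  rw [ofRowsCols_of_lt hj]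
  exact card_filter_le _ _ |>.trans (by simp)

theorem le_ofRowsCols_iff (hb : AntitoneOn b (Set.Icc 1 d)) {i j : ℕ} (hi : 1 ≤ i) (hid : i ≤ d)
    (hj : d < j) : i ≤ ofRowsCols d a b j ↔ j ≤ b i := by
  rw [ofRowsCols_of_lt hj]
  constructor
  · intro h
    by_contra hji
    have hsub : {k ∈ Icc 1 d | j ≤ b k} ⊆ Icc 1 (i - 1) := fun k hk => by
      simp only [mem_filter, mem_Icc] at hk ⊢
      refine ⟨hk.1.1, ?_⟩
      by_contra hki
      have := hb ⟨hi, hid⟩ hk.1 (by omega : i ≤ k)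
      omega
    have := card_le_card hsub
    simp only [Nat.card_Icc] at this
    omega
  · intro h
    have hsub : Icc 1 i ⊆ {k ∈ Icc 1 d | j ≤ b k} := fun k hk => by
      simp only [mem_filter, mem_Icc] at hk ⊢
      exact ⟨⟨hk.1, hk.2.trans hid⟩, h.trans (hb ⟨hk.1, hk.2.trans hid⟩ ⟨hi, hid⟩ hk.2)⟩
    simpa using card_le_card hsub

theorem isPartition_ofRowsCols (ha : AntitoneOn a (Set.Icc 1 d))
    (hb : AntitoneOn b (Set.Icc 1 d)) (had : d ≤ a d) : IsPartition (ofRowsCols d a b) := by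
  refine ⟨by simp [ofRowsCols], fun i j hi hij => ?_, d + b 1 + 1, fun j hj => ?_⟩
  · by_cases hjd : j ≤ d
    · rw [ofRowsCols_of_le hi (hij.trans hjd), ofRowsCols_of_le (hi.trans hij) hjd]
      exact ha ⟨hi, hij.trans hjd⟩ ⟨hi.trans hij, hjd⟩ hij
    by_cases hid : i ≤ d
    · rw [ofRowsCols_of_le hi hid]
      exact (ofRowsCols_le_of_lt (not_le.1 hjd)).trans
        (had.trans (ha ⟨hi, hid⟩ ⟨hi.trans hid, le_rfl⟩ hid))
    · rw [ofRowsCols_of_lt (not_le.1 hid), ofRowsCols_of_lt (not_le.1 hjd)]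
      exact card_le_card (monotone_filter_right _ fun k _ hk => hij.trans hk)
  · rw [ofRowsCols_of_lt (by omega), card_eq_zero, filter_eq_empty_iff]
    intro k hk
    have := hb ⟨le_rfl, (mem_Icc.1 hk).1.trans (mem_Icc.1 hk).2⟩ (mem_Icc.1 hk) (mem_Icc.1 hk).1
    omega

theorem durfee_ofRowsCols (had : d ≤ a d) : durfee (ofRowsCols d a b) = d := by
  have hlt : ∀ k, d < k → ofRowsCols d a b k < k := fun k hk =>
    (ofRowsCols_le_of_lt hk).trans_lt hk
  have hbdd : BddAbove {k | k ≤ ofRowsCols d a b k} :=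
    ⟨d, fun k hk => not_lt.1 fun hdk => (hlt k hdk).not_ge hk⟩
  refine le_antisymm (csSup_le ⟨0, Nat.zero_le _⟩ fun k hk => not_lt.1 fun hdk =>
    (hlt k hdk).not_ge hk) (le_csSup hbdd ?_)
  rcases Nat.eq_zero_or_pos d with hd | hd
  · exact hd ▸ Nat.zero_le _
  · show d ≤ ofRowsCols d a b d
    rwa [ofRowsCols_of_le hd le_rfl]

theorem conj_ofRowsCols (ha : AntitoneOn a (Set.Icc 1 d)) (hb : AntitoneOn b (Set.Icc 1 d))
    (had : d ≤ a d) (hbd : d ≤ b d) {i : ℕ} (hi : 1 ≤ i) (hid : i ≤ d) :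
    conj (ofRowsCols d a b) i = b i := by
  have h : {j | 1 ≤ j ∧ i ≤ ofRowsCols d a b j} = Set.Icc 1 (b i) := by
    ext j
    refine and_congr_right fun hj => ?_
    by_cases hjd : j ≤ d
    · have := ha ⟨hj, hjd⟩ ⟨hj.trans hjd, le_rfl⟩ hjd
      have := hb ⟨hi, hid⟩ ⟨hi.trans hid, le_rfl⟩ hid
      rw [ofRowsCols_of_le hj hjd]
      exact iff_of_true (by omega) (by omega)
    · exact le_ofRowsCols_iff hb hi hid (not_le.1 hjd)
  rw [conj, h, Set.ncard_Icc_nat, Nat.add_sub_cancel]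

end OfRowsCols

/-- A hook of length `α i ≥ 2` whose arm exceeds its leg by `1` or `2` has arm `⌊(α i + 1) / 2⌋`
and leg `⌊(α i - 2) / 2⌋`: the parity of `α i` decides which. -/
def rowOfAng (α : ℕ → ℕ) (i : ℕ) : ℕ := (α i + 1) / 2 + i

def colOfAng (α : ℕ → ℕ) (i : ℕ) : ℕ := (α i - 2) / 2 + i

noncomputable def angInv (α : ℕ → ℕ) : ℕ → ℕ := ofRowsCols (len α) (rowOfAng α) (colOfAng α)

section AngInv

variable {α : ℕ → ℕ}

theorem antitoneOn_rowOfAng {m : ℕ} (hgap : ∀ i, 1 ≤ i → i + 1 ≤ m → α (i + 1) + 2 ≤ α i) :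
    AntitoneOn (rowOfAng α) (Set.Icc 1 m) :=
  antitoneOn_Icc_of_succ_le fun i hi him => by
    have := hgap i hi him
    simp only [rowOfAng]
    omega

theorem antitoneOn_colOfAng {m : ℕ} (hgap : ∀ i, 1 ≤ i → i + 1 ≤ m → α (i + 1) + 2 ≤ α i)
    (htwo : ∀ i, 1 ≤ i → i ≤ m → 2 ≤ α i) : AntitoneOn (colOfAng α) (Set.Icc 1 m) :=
  antitoneOn_Icc_of_succ_le fun i hi him => by
    have := hgap i hi him
    have := htwo (i + 1) (by omega) him
    simp only [colOfAng]
    omega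

theorem isPartition_angInv (hgap : ∀ i, 1 ≤ i → i + 1 ≤ len α → α (i + 1) + 2 ≤ α i)
    (htwo : ∀ i, 1 ≤ i → i ≤ len α → 2 ≤ α i) : IsPartition (angInv α) :=
  isPartition_ofRowsCols (antitoneOn_rowOfAng hgap) (antitoneOn_colOfAng hgap htwo)
    (Nat.le_add_left _ _)

theorem durfee_angInv : durfee (angInv α) = len α :=
  durfee_ofRowsCols (Nat.le_add_left _ _)

theorem angInv_of_le {i : ℕ} (hi : 1 ≤ i) (hid : i ≤ len α) : angInv α i = rowOfAng α i :=
  ofRowsCols_of_le hi hid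

theorem conj_angInv (hgap : ∀ i, 1 ≤ i → i + 1 ≤ len α → α (i + 1) + 2 ≤ α i)
    (htwo : ∀ i, 1 ≤ i → i ≤ len α → 2 ≤ α i) {i : ℕ} (hi : 1 ≤ i) (hid : i ≤ len α) :
    conj (angInv α) i = colOfAng α i :=
  conj_ofRowsCols (antitoneOn_rowOfAng hgap) (antitoneOn_colOfAng hgap htwo)
    (Nat.le_add_left _ _) (Nat.le_add_left _ _) hi hid

theorem rank_angInv (hgap : ∀ i, 1 ≤ i → i + 1 ≤ len α → α (i + 1) + 2 ≤ α i)
    (htwo : ∀ i, 1 ≤ i → i ≤ len α → 2 ≤ α i) {i : ℕ} (hi : 1 ≤ i) (hid : i ≤ len α) :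
    rank (angInv α) i ∈ ({1, 2} : Set ℤ) := by
  have := htwo i hi hid
  simp only [rank, angInv_of_le hi hid, conj_angInv hgap htwo hi hid, rowOfAng, colOfAng,
    Set.mem_insert_iff, Set.mem_singleton_iff]
  omega

theorem angPart_angInv (hα : IsPartition α)
    (hgap : ∀ i, 1 ≤ i → i + 1 ≤ len α → α (i + 1) + 2 ≤ α i)
    (htwo : ∀ i, 1 ≤ i → i ≤ len α → 2 ≤ α i) : angPart (angInv α) = α := by
  funext j
  rcases Nat.eq_zero_or_pos j with rfl | hj
  · rw [angPart_zero, hα.1]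
  by_cases hjd : j ≤ len α
  · have := htwo j hj hjd
    rw [angPart_of_le hj (durfee_angInv.symm ▸ hjd), angInv_of_le hj hjd,
      conj_angInv hgap htwo hj hjd, rowOfAng, colOfAng]
    omega
  · rw [angPart_of_durfee_lt (durfee_angInv.symm ▸ not_le.1 hjd),
      hα.apply_eq_zero_of_len_lt (not_le.1 hjd)]

theorem IsPartition.angInv_angPart {π : ℕ → ℕ} (hπ : IsPartition π)
    (hr : ∀ i, 1 ≤ i → i ≤ durfee π → rank π i ∈ ({1, 2} : Set ℤ)) :
    angInv (angPart π) = π := by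
  obtain ⟨hgap, htwo⟩ := hπ.angPart_succ_add_two_le_and_two_le hr
  refine (hπ.eq_of_durfee_eq (isPartition_angInv hgap htwo)
    (by rw [durfee_angInv, hπ.len_angPart]) fun i hi hid => ?_).symm
  have hid' : i ≤ len (angPart π) := hπ.len_angPart ▸ hid
  have hri := hr i hi hid
  simp only [rank, Set.mem_insert_iff, Set.mem_singleton_iff] at hri
  have := hπ.durfee_le_conj hi hid
  rw [angInv_of_le hi hid', conj_angInv hgap htwo hi hid', rowOfAng, colOfAng,
    angPart_of_le hi hid]
  omega

end AngInv

theorem stmt6 (n : ℕ) :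
    Set.BijOn angPart
      {π | IsPartition π ∧ size π = n ∧
        ∀ i, 1 ≤ i → i ≤ durfee π → rank π i ∈ ({1, 2} : Set ℤ)}
      {α | IsPartition α ∧ size α = n ∧
        (∀ i, 1 ≤ i → i + 1 ≤ len α → α (i + 1) + 2 ≤ α i) ∧ (∀ i, 1 ≤ i → i ≤ len α → 2 ≤ α i)} := by
  refine Set.InvOn.bijOn (f' := angInv)
    ⟨fun π ⟨hπ, _, hr⟩ => hπ.angInv_angPart hr,
      fun α ⟨hα, _, hgap, htwo⟩ => angPart_angInv hα hgap htwo⟩ ?_ ?_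
  · rintro π ⟨hπ, rfl, hr⟩
    exact ⟨hπ.isPartition_angPart, hπ.size_angPart, hπ.angPart_succ_add_two_le_and_two_le hr⟩
  · rintro α ⟨hα, rfl, hgap, htwo⟩
    have hP := isPartition_angInv hgap htwo
    refine ⟨hP, ?_, fun i hi hid => rank_angInv hgap htwo hi (durfee_angInv ▸ hid)⟩
    conv_rhs => rw [← angPart_angInv hα hgap htwo]
    exact hP.size_angPart.symm
end

section
/- Let 0 < r ≤ M/2 and k = ⌊M/2⌋, and let π be a partition with first part π_1 ≤ u and number of parts π'_1 ≤ v, with first successive rank r_1 in [−r+2, M−r−2]. Then the first angle part α_1 = π_1 + π'_1 − 1 and its color c(1) (defined as c(1) = (r_1+r−1)/2 if α_1 ≡ r (mod 2) and (r_1+r)/2 otherwise) satisfy (u+v−1) − α_1 ≥ |2c(1) − r + (v−u) + 1/2| − 1/2. -/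
/-- The color assigned to the `i`-th angle: `(r_i + r - 1)/2` if `α_i ≡ r (mod 2)`,
`(r_i + r)/2` otherwise (and `0` outside the range `1 ≤ i ≤ d(π)`). -/
noncomputable def colorOf (r : ℕ) (π : ℕ → ℕ) (i : ℕ) : ℕ :=
  if 1 ≤ i ∧ i ≤ durfee π then
    (if angPart π i % 2 = r % 2 then ((rank π i + r - 1) / 2).toNat
     else ((rank π i + r) / 2).toNat)
  else 0

/-!
Write `a = π₁` and `b = π'₁`. Then `α₁ = a + b - 1`, and since `α₁ ≡ r₁ + 1 (mod 2)` the parity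
rule defining `c(1)` makes `2 c(1) - r = a - b - δ` with `δ ∈ {0, 1}`; the lower bound on `r₁` keeps
the colour nonnegative, so `toNat` truncates nothing. With `x = (v - b) - (u - a)` the claim reads
`|x + 1/2 - δ| - 1/2 ≤ (u - a) + (v - b)`, which is the triangle inequality.
-/

namespace IsPartition

variable {π : ℕ → ℕ}

theorem le_apply_one_of_conj_pos (hπ : IsPartition π) {i : ℕ} (h : 0 < conj π i) : i ≤ π 1 := by
  obtain ⟨j, hj1, hij⟩ := Set.nonempty_of_ncard_ne_zero h.ne'
  exact hij.trans (hπ.2.1 1 j le_rfl hj1)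

theorem le_durfee (hπ : IsPartition π) {d : ℕ} (hd : d ≤ π d) : d ≤ durfee π := by
  refine le_csSup ⟨π 1, fun e he => ?_⟩ hd
  rcases Nat.eq_zero_or_pos e with rfl | he0
  · exact Nat.zero_le _
  · exact (show e ≤ π e from he).trans (hπ.2.1 1 e le_rfl he0)

theorem angPart_one (hπ : IsPartition π) (h : 1 ≤ π 1) :
    (angPart π 1 : ℤ) = π 1 + conj π 1 - 1 := by
  rw [angPart, if_pos ⟨le_rfl, hπ.le_durfee h⟩]
  omega

theorem two_mul_colorOf_one (hπ : IsPartition π) (h : 1 ≤ π 1) (r : ℕ)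
    (hr : 1 ≤ rank π 1 + r) :
    (2 * colorOf r π 1 : ℤ) = rank π 1 + r - 1 ∨ (2 * colorOf r π 1 : ℤ) = rank π 1 + r := by
  have hα := hπ.angPart_one h
  rw [rank] at hr
  rw [colorOf, if_pos ⟨le_rfl, hπ.le_durfee h⟩, rank]
  split_ifs <;> omega

end IsPartition

theorem stmt15_general (M r u v : ℕ)
    (π : ℕ → ℕ) (hπ : IsPartition π) (hl : 1 ≤ len π)
    (hu : π 1 ≤ u) (hv : len π ≤ v)
    (hr1 : -(r : ℤ) + 2 ≤ rank π 1 ∧ rank π 1 ≤ (M : ℤ) - r - 2) :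
    ((u : ℚ) + (v : ℚ) - 1) - (angPart π 1 : ℚ) ≥
      |2 * (colorOf r π 1 : ℚ) - (r : ℚ) + ((v : ℚ) - (u : ℚ)) + 1/2| - 1/2 := by
  have hπ1 : 1 ≤ π 1 := hπ.le_apply_one_of_conj_pos hl
  have hα : (angPart π 1 : ℚ) = π 1 + conj π 1 - 1 := by exact_mod_cast hπ.angPart_one hπ1
  have hu' : (π 1 : ℚ) ≤ u := by exact_mod_cast hu
  have hv' : (conj π 1 : ℚ) ≤ v := by exact_mod_cast hv
  rw [ge_iff_le, sub_le_iff_le_add, abs_le]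
  rcases hπ.two_mul_colorOf_one hπ1 r (by omega) with hc | hc <;>
  · have hc' := congrArg (Int.cast : ℤ → ℚ) hc
    push_cast [rank] at hc'
    constructor <;> linarith

theorem stmt15 (M r u v : ℕ) (hr : 0 < r) (hM : 2 * r ≤ M)
    (π : ℕ → ℕ) (hπ : IsPartition π) (hl : 1 ≤ len π)
    (hu : π 1 ≤ u) (hv : len π ≤ v)
    (hr1 : -(r : ℤ) + 2 ≤ rank π 1 ∧ rank π 1 ≤ (M : ℤ) - r - 2) :
    ((u : ℚ) + (v : ℚ) - 1) - (angPart π 1 : ℚ) ≥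
      |2 * (colorOf r π 1 : ℚ) - (r : ℚ) + ((v : ℚ) - (u : ℚ)) + 1/2| - 1/2 :=
  stmt15_general M r u v π hπ hl hu hv hr1
end
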